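/- arXiv:2205.06478 — 5 statements merged into one kernel-verified Lean document; each statement's English description precedes it below -/
import Mathlib

section
/- Let D ∈ ℝ^{n×n} be symmetric positive semidefinite, let L ⊂ ℝ^n be a linear subspace with orthogonal projections P_L onto L and P_{L⊥} onto its orthogonal complement. Assume ker(D P_L) = L^⊥. Then the matrix D P_L + P_{L⊥} is invertible. -/
open Matrix

theorem DP_add_Q_isUnit (n : ℕ) (D P Q : Matrix (Fin n) (Fin n) ℝ)
    (L : Submodule ℝ (Fin n → ℝ))
    (hDsymm : Dᵀ = D) (hDpsd : D.PosSemidef)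
    -- `P` is the orthogonal projection onto `L`:
    (hPsymm : Pᵀ = P) (hPidem : P * P = P)
    (hPrange : ∀ x : Fin n → ℝ, P.mulVec x ∈ L)
    (hPfix : ∀ x ∈ L, P.mulVec x = x)
    -- `Q` is the orthogonal projection onto `L^⊥`:
    (hQ : Q = 1 - P)
    -- `ker (D P) = L^⊥`:
    (hker : ∀ x : Fin n → ℝ, (D * P).mulVec x = 0 ↔ ∀ y ∈ L, y ⬝ᵥ x = 0) :
    IsUnit (D * P + Q) := by
  rw [← Matrix.mulVec_injective_iff_isUnit]
  rw [← Matrix.coe_mulVecLin]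
  rw [injective_iff_map_eq_zero]
  intro x hx
  simp only [Matrix.mulVecLin_apply] at hx
  -- hx : (D * P + Q) *ᵥ x = 0
  have hx' : (D * P) *ᵥ x + Q *ᵥ x = 0 := by rw [← Matrix.add_mulVec]; exact hx
  -- inner product with P x
  have hPQ : P * Q = 0 := by rw [hQ, Matrix.mul_sub, Matrix.mul_one, hPidem, sub_self]
  have h1 : (P *ᵥ x) ⬝ᵥ (Q *ᵥ x) = 0 := by
    have hpx : P *ᵥ x = x ᵥ* P := by rw [← Matrix.vecMul_transpose, hPsymm]
    rw [hpx, Matrix.dotProduct_mulVec, Matrix.vecMul_vecMul, hPQ,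
      Matrix.vecMul_zero, zero_dotProduct]
  have h2 : (P *ᵥ x) ⬝ᵥ (D *ᵥ (P *ᵥ x)) = 0 := by
    have := congrArg (fun v => (P *ᵥ x) ⬝ᵥ v) hx'
    simp only [dotProduct_add, dotProduct_zero] at this
    rw [h1, add_zero, ← Matrix.mulVec_mulVec] at this
    exact this
  have hDPx : D *ᵥ (P *ᵥ x) = 0 := by
    have := (hDpsd.dotProduct_mulVec_zero_iff (P *ᵥ x)).mp (by simpa using h2)
    exact this
  have hDPx' : (D * P) *ᵥ x = 0 := by rw [← Matrix.mulVec_mulVec]; exact hDPx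
  have horth := (hker x).mp hDPx'
  have hQx : Q *ᵥ x = 0 := by rw [hDPx', zero_add] at hx'; exact hx'
  have hxL : x ∈ L := by
    rw [hQ, Matrix.sub_mulVec, Matrix.one_mulVec, sub_eq_zero] at hQx
    rw [hQx]; exact hPrange x
  have : x ⬝ᵥ x = 0 := horth x hxL
  exact (dotProduct_self_eq_zero (R := ℝ)).mp this
end

section
/- Let D ∈ ℝ^{n×n} be symmetric positive semidefinite with range L, ker(D P_L) = L^⊥, and suppose all nonzero eigenvalues of D are ≥ ρ > 0. Then for every z ∈ ℝ^n, λ_m |P_L z|² ≤ zᵀ D^{BD} z ≤ λ_M |P_L z|², where λ_m = (1 + n‖D‖_F)^{−1} and λ_M = max{1, ρ^{−1}}, and ‖D‖_F is the Frobenius norm of D. -/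
/-!
Put `M = D + (1 - P)`, which is `D * P + Q` because `D * P = D`. It is positive definite, and
`M * P = P * M = D`; so with `w = M⁻¹ z` the form `zᵀ P M⁻¹ z` is `wᵀ D w` and `P z = D w`.
In an eigenbasis of `D`, with coordinates `v` of `w`, this compares `wᵀ D w = ∑ μᵢ vᵢ²` with
`|D w|² = ∑ μᵢ² vᵢ²` term by term: `μᵢ² ≤ c μᵢ` for `0 ≤ μᵢ ≤ c`, where `c = 1 + n ‖D‖_F` works
since `μᵢ² ≤ ∑ μⱼ² = ‖D‖_F²`, and `ρ μᵢ ≤ μᵢ²` since `μᵢ = 0` or `μᵢ ≥ ρ`.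
-/

open Matrix

namespace Matrix

variable {ι : Type*} [Fintype ι] [DecidableEq ι]

section Spectral

variable {D U : Matrix ι ι ℝ} {μ : ι → ℝ}

theorem IsHermitian.eq_mul_diagonal_mul_transpose (hD : D.IsHermitian) :
    D = (hD.eigenvectorUnitary : Matrix ι ι ℝ) * diagonal hD.eigenvalues *
      (hD.eigenvectorUnitary : Matrix ι ι ℝ)ᵀ := by
  simpa [star_eq_conjTranspose] using hD.spectral_theorem

theorem IsHermitian.transpose_eigenvectorUnitary_mul_self (hD : D.IsHermitian) :
    (hD.eigenvectorUnitary : Matrix ι ι ℝ)ᵀ * hD.eigenvectorUnitary = 1 := by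
  simpa [star_eq_conjTranspose] using (mem_unitaryGroup_iff'.mp hD.eigenvectorUnitary.2)

theorem mulVec_dotProduct_mulVec_of_transpose_mul_self (hU : Uᵀ * U = 1) (v : ι → ℝ) :
    U *ᵥ v ⬝ᵥ U *ᵥ v = v ⬝ᵥ v := by
  rw [dotProduct_mulVec, ← mulVec_transpose, mulVec_mulVec, hU, one_mulVec]

theorem dotProduct_mulVec_eq_sum_of_eq_mul_diagonal (hD : D = U * diagonal μ * Uᵀ)
    (w : ι → ℝ) : w ⬝ᵥ D *ᵥ w = ∑ i, μ i * (Uᵀ *ᵥ w) i ^ 2 := by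
  rw [hD, ← mulVec_mulVec, ← mulVec_mulVec, dotProduct_mulVec, ← mulVec_transpose]
  simp only [dotProduct, mulVec_diagonal]
  exact Finset.sum_congr rfl fun i _ => by ring

theorem mulVec_dotProduct_mulVec_eq_sum_of_eq_mul_diagonal (hU : Uᵀ * U = 1)
    (hD : D = U * diagonal μ * Uᵀ) (w : ι → ℝ) :
    D *ᵥ w ⬝ᵥ D *ᵥ w = ∑ i, μ i ^ 2 * (Uᵀ *ᵥ w) i ^ 2 := by
  rw [hD, ← mulVec_mulVec, ← mulVec_mulVec, mulVec_dotProduct_mulVec_of_transpose_mul_self hU]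
  simp only [dotProduct, mulVec_diagonal]
  exact Finset.sum_congr rfl fun i _ => by ring

theorem sum_sq_apply_eq_sum_sq_of_eq_mul_diagonal (hU : Uᵀ * U = 1)
    (hD : D = U * diagonal μ * Uᵀ) : ∑ i, ∑ j, D i j ^ 2 = ∑ i, μ i ^ 2 := by
  have hDD : D * Dᵀ = U * diagonal (fun i => μ i ^ 2) * Uᵀ := by
    rw [hD, transpose_mul, transpose_mul, transpose_transpose, diagonal_transpose]
    simp only [mul_assoc]
    rw [← mul_assoc Uᵀ, hU, one_mul, ← mul_assoc (diagonal μ), diagonal_mul_diagonal]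
    simp only [sq]
  calc ∑ i, ∑ j, D i j ^ 2 = (D * Dᵀ).trace := by
        simp only [trace, diag_apply, mul_apply, transpose_apply, sq]
    _ = ∑ i, μ i ^ 2 := by
        rw [hDD, trace_mul_cycle, hU, one_mul, trace_diagonal]

theorem IsHermitian.hasEigenvalue_eigenvalues (hD : D.IsHermitian) (i : ι) :
    Module.End.HasEigenvalue (toLin' D) (hD.eigenvalues i) :=
  Module.End.hasEigenvalue_iff_mem_spectrum.mpr <|
    (spectrum_toLin' D).symm ▸ hD.eigenvalues_mem_spectrum_real i

theorem IsHermitian.eigenvalues_le_sqrt_sum_sq (hD : D.IsHermitian) (i : ι) :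
    hD.eigenvalues i ≤ √(∑ i, ∑ j, D i j ^ 2) := by
  rw [sum_sq_apply_eq_sum_sq_of_eq_mul_diagonal hD.transpose_eigenvectorUnitary_mul_self
    hD.eq_mul_diagonal_mul_transpose]
  exact Real.le_sqrt_of_sq_le (Finset.single_le_sum (fun j _ => sq_nonneg _) (Finset.mem_univ i))

theorem PosSemidef.mulVec_dotProduct_mulVec_le (hD : D.PosSemidef) {c : ℝ}
    (hc : ∀ i, hD.1.eigenvalues i ≤ c) (w : ι → ℝ) :
    D *ᵥ w ⬝ᵥ D *ᵥ w ≤ c * (w ⬝ᵥ D *ᵥ w) := by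
  have hspec := hD.1.eq_mul_diagonal_mul_transpose
  rw [mulVec_dotProduct_mulVec_eq_sum_of_eq_mul_diagonal
    hD.1.transpose_eigenvectorUnitary_mul_self hspec,
    dotProduct_mulVec_eq_sum_of_eq_mul_diagonal hspec, Finset.mul_sum]
  refine Finset.sum_le_sum fun i _ => ?_
  nlinarith [mul_nonneg (mul_nonneg (sub_nonneg.2 (hc i)) (hD.eigenvalues_nonneg i))
    (sq_nonneg (((hD.1.eigenvectorUnitary : Matrix ι ι ℝ)ᵀ *ᵥ w) i))]

theorem PosSemidef.dotProduct_mulVec_le (hD : D.PosSemidef) {ρ : ℝ} (hρ : 0 < ρ)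
    (hgap : ∀ i, hD.1.eigenvalues i ≠ 0 → ρ ≤ hD.1.eigenvalues i) (w : ι → ℝ) :
    w ⬝ᵥ D *ᵥ w ≤ ρ⁻¹ * (D *ᵥ w ⬝ᵥ D *ᵥ w) := by
  have hspec := hD.1.eq_mul_diagonal_mul_transpose
  rw [mulVec_dotProduct_mulVec_eq_sum_of_eq_mul_diagonal
    hD.1.transpose_eigenvectorUnitary_mul_self hspec,
    dotProduct_mulVec_eq_sum_of_eq_mul_diagonal hspec, Finset.mul_sum]
  refine Finset.sum_le_sum fun i _ => ?_
  rcases eq_or_ne (hD.1.eigenvalues i) 0 with h0 | hne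
  · simp [h0]
  · rw [le_inv_mul_iff₀ hρ]
    nlinarith [mul_nonneg (mul_nonneg (hD.eigenvalues_nonneg i) (sub_nonneg.2 (hgap i hne)))
      (sq_nonneg (((hD.1.eigenvectorUnitary : Matrix ι ι ℝ)ᵀ *ᵥ w) i))]

end Spectral

section BottDuffin

variable {D P M : Matrix ι ι ℝ}

theorem mul_eq_self_of_mulVec_mem {L : Submodule ℝ (ι → ℝ)} (hPfix : ∀ x ∈ L, P *ᵥ x = x)
    (hD : ∀ x, D *ᵥ x ∈ L) : P * D = D :=
  toLin'.injective <| LinearMap.ext fun x => by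
    simpa only [toLin'_apply, ← mulVec_mulVec] using hPfix _ (hD x)

theorem posDef_add_one_sub (hD : D.PosSemidef) (hPsymm : Pᵀ = P) (hPidem : P * P = P)
    (hP : ∀ x, P *ᵥ x ∈ LinearMap.range D.mulVecLin) : (D + (1 - P)).PosDef := by
  have hQ : (1 - P).PosSemidef := by
    convert posSemidef_conjTranspose_mul_self (1 - P) using 1
    simp [conjTranspose_eq_transpose_of_trivial, hPsymm, sub_mul, mul_sub, hPidem]
  refine .of_dotProduct_mulVec_pos (hD.1.add hQ.1) fun x hx => ?_
  have hDx := hD.dotProduct_mulVec_nonneg x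
  have hQx := hQ.dotProduct_mulVec_nonneg x
  simp only [star_trivial, add_mulVec, dotProduct_add] at hDx hQx ⊢
  refine lt_of_le_of_ne (add_nonneg hDx hQx) fun h0 => hx ?_
  have hDx0 : D *ᵥ x = 0 := (hD.dotProduct_mulVec_zero_iff x).1 (by rw [star_trivial]; linarith)
  have hPx : P *ᵥ x = x := by
    have := (hQ.dotProduct_mulVec_zero_iff x).1 (by rw [star_trivial]; linarith)
    rwa [sub_mulVec, one_mulVec, sub_eq_zero, eq_comm] at this
  -- `x` lies in both the range and the kernel of the symmetric matrix `D`
  obtain ⟨y, hy⟩ := hPx ▸ hP x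
  have hDsymm : Dᵀ = D := (conjTranspose_eq_transpose_of_trivial D).symm.trans hD.1
  rw [← dotProduct_self_eq_zero]
  calc x ⬝ᵥ x = D *ᵥ y ⬝ᵥ x := congrArg (· ⬝ᵥ x) hy.symm
    _ = y ⬝ᵥ D *ᵥ x := by
      rw [dotProduct_comm, dotProduct_mulVec, ← mulVec_transpose, hDsymm, dotProduct_comm]
    _ = 0 := by rw [hDx0, dotProduct_zero]

theorem dotProduct_mul_inv_mulVec (hM : IsUnit M.det) (hMsymm : Mᵀ = M) (hMP : M * P = D)
    (z : ι → ℝ) : z ⬝ᵥ (P * M⁻¹) *ᵥ z = M⁻¹ *ᵥ z ⬝ᵥ D *ᵥ (M⁻¹ *ᵥ z) := by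
  have hPM : P * M⁻¹ = M⁻¹ * (D * M⁻¹) := by
    rw [← hMP, ← mul_assoc, ← mul_assoc, nonsing_inv_mul _ hM, one_mul]
  rw [hPM, ← mulVec_mulVec, dotProduct_mulVec, ← mulVec_transpose, transpose_nonsing_inv,
    hMsymm, mulVec_mulVec]

theorem mulVec_eq_mulVec_inv_mulVec (hM : IsUnit M.det) (hPM : P * M = D) (z : ι → ℝ) :
    P *ᵥ z = D *ᵥ (M⁻¹ *ᵥ z) := by
  rw [← hPM, ← mulVec_mulVec, mulVec_mulVec z M, mul_nonsing_inv _ hM, one_mulVec]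

end BottDuffin

end Matrix

theorem bottDuffin_quadratic_bounds_general (n : ℕ) (D P Q : Matrix (Fin n) (Fin n) ℝ)
    (L : Submodule ℝ (Fin n → ℝ)) (ρ : ℝ) (hρ : 0 < ρ)
    (hDsymm : Dᵀ = D) (hDpsd : D.PosSemidef)
    -- `P` is the orthogonal projection onto `L`:
    (hPsymm : Pᵀ = P) (hPidem : P * P = P)
    (hPrange : ∀ x : Fin n → ℝ, P.mulVec x ∈ L)
    (hPfix : ∀ x ∈ L, P.mulVec x = x)
    -- `Q` is the orthogonal projection onto `L^⊥`:
    (hQ : Q = 1 - P)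
    -- `ran D = L`:
    (hranD : LinearMap.range D.mulVecLin = L)
    -- all nonzero eigenvalues of `D` are `≥ ρ`:
    (heig : ∀ μ : ℝ, Module.End.HasEigenvalue (Matrix.toLin' D) μ → μ ≠ 0 → ρ ≤ μ) :
    ∀ z : Fin n → ℝ,
      (1 + n * Real.sqrt (∑ i, ∑ j, D i j ^ 2))⁻¹ * (∑ i, (P.mulVec z i) ^ 2) ≤
          z ⬝ᵥ (P * (D * P + Q)⁻¹).mulVec z ∧
      z ⬝ᵥ (P * (D * P + Q)⁻¹).mulVec z ≤
          max 1 ρ⁻¹ * (∑ i, (P.mulVec z i) ^ 2) := by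
  intro z
  have hPD : P * D = D :=
    mul_eq_self_of_mulVec_mem hPfix fun x => hranD ▸ LinearMap.mem_range_self D.mulVecLin x
  have hDP : D * P = D := by simpa [hDsymm, hPsymm] using congrArg transpose hPD
  rw [hDP, hQ]
  have hMdet : IsUnit (D + (1 - P)).det :=
    (posDef_add_one_sub hDpsd hPsymm hPidem fun x => hranD.symm ▸ hPrange x).det_pos.ne'.isUnit
  have hMsymm : (D + (1 - P))ᵀ = D + (1 - P) := by simp [hDsymm, hPsymm]
  rw [dotProduct_mul_inv_mulVec hMdet hMsymm (D := D) (by simp [add_mul, sub_mul, hDP, hPidem]),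
    mulVec_eq_mulVec_inv_mulVec hMdet (D := D) (by simp [mul_add, mul_sub, hPD, hPidem])]
  set w := (D + (1 - P))⁻¹ *ᵥ z
  have hnorm : ∑ i, (D *ᵥ w) i ^ 2 = D *ᵥ w ⬝ᵥ D *ᵥ w := by simp only [dotProduct, sq]
  rw [hnorm]
  constructor
  · rw [inv_mul_le_iff₀ (by positivity)]
    refine hDpsd.mulVec_dotProduct_mulVec_le (fun i => ?_) w
    have hn : (1 : ℝ) ≤ n := by exact_mod_cast i.pos
    calc hDpsd.1.eigenvalues i ≤ √(∑ i, ∑ j, D i j ^ 2) := hDpsd.1.eigenvalues_le_sqrt_sum_sq i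
      _ ≤ n * √(∑ i, ∑ j, D i j ^ 2) := le_mul_of_one_le_left (Real.sqrt_nonneg _) hn
      _ ≤ 1 + n * √(∑ i, ∑ j, D i j ^ 2) := le_add_of_nonneg_left zero_le_one
  · calc w ⬝ᵥ D *ᵥ w ≤ ρ⁻¹ * (D *ᵥ w ⬝ᵥ D *ᵥ w) :=
          hDpsd.dotProduct_mulVec_le hρ (fun i => heig _ (hDpsd.1.hasEigenvalue_eigenvalues i)) w
      _ ≤ max 1 ρ⁻¹ * (D *ᵥ w ⬝ᵥ D *ᵥ w) :=
          mul_le_mul_of_nonneg_right (le_max_right _ _)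
            (Finset.sum_nonneg fun _ _ => mul_self_nonneg _)

theorem bottDuffin_quadratic_bounds (n : ℕ) (D P Q : Matrix (Fin n) (Fin n) ℝ)
    (L : Submodule ℝ (Fin n → ℝ)) (ρ : ℝ) (hρ : 0 < ρ)
    (hDsymm : Dᵀ = D) (hDpsd : D.PosSemidef)
    -- `P` is the orthogonal projection onto `L`:
    (hPsymm : Pᵀ = P) (hPidem : P * P = P)
    (hPrange : ∀ x : Fin n → ℝ, P.mulVec x ∈ L)
    (hPfix : ∀ x ∈ L, P.mulVec x = x)
    -- `Q` is the orthogonal projection onto `L^⊥`: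
    (hQ : Q = 1 - P)
    -- `ran D = L`:
    (hranD : LinearMap.range D.mulVecLin = L)
    -- `ker (D P) = L^⊥`:
    (hker : ∀ x : Fin n → ℝ, (D * P).mulVec x = 0 ↔ ∀ y ∈ L, y ⬝ᵥ x = 0)
    -- all nonzero eigenvalues of `D` are `≥ ρ`:
    (heig : ∀ μ : ℝ, Module.End.HasEigenvalue (Matrix.toLin' D) μ → μ ≠ 0 → ρ ≤ μ) :
    ∀ z : Fin n → ℝ,
      (1 + n * Real.sqrt (∑ i, ∑ j, D i j ^ 2))⁻¹ * (∑ i, (P.mulVec z i) ^ 2) ≤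
          z ⬝ᵥ (P * (D * P + Q)⁻¹).mulVec z ∧
      z ⬝ᵥ (P * (D * P + Q)⁻¹).mulVec z ≤
          max 1 ρ⁻¹ * (∑ i, (P.mulVec z i) ^ 2) :=
  bottDuffin_quadratic_bounds_general n D P Q L ρ hρ hDsymm hDpsd hPsymm hPidem hPrange hPfix hQ
    hranD heig
end

section
/- Let c ∈ ℝ^n with c_i ≥ δ for some δ ∈ (0, 1/n) and ∑_{i=1}^n c_i ≤ n. For any ζ ∈ ℝ^{n−1}, ζᵀ P̃_L ζ ≥ (c_n / ∑_{k=1}^n c_k) |ζ|², where P̃_L is the upper-left (n−1)×(n−1) submatrix of the matrix with entries δ_{ij} − √(c_i c_j)/∑_k c_k. In particular, if c_i ≥ δ for all i, then ζᵀ P̃_L ζ ≥ (δ/n)|ζ|². -/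
/-!
Writing `v i = √(c i)` for `i < n` and `S = ∑ k, c k`, the matrix `P̃_L` is the rank-one
perturbation `1 - vvᵀ / S` of the identity. By Cauchy–Schwarz its quadratic form is at least
`(1 - |v|² / S) |ζ|²`, and `|v|² = S - c n`, which gives the constant `c n / S`. The second bound
follows from `c n ≥ δ` and `S ≤ n`.
-/

open Matrix

section RankOnePerturbation

variable {ι : Type*} [Fintype ι]

theorem sq_dotProduct_le {R : Type*} [CommSemiring R] [LinearOrder R] [IsStrictOrderedRing R]
    [ExistsAddOfLE R] (v ζ : ι → R) : (v ⬝ᵥ ζ) ^ 2 ≤ (v ⬝ᵥ v) * (ζ ⬝ᵥ ζ) := by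
  simpa only [dotProduct, sq] using Finset.sum_mul_sq_le_sq_mul_sq Finset.univ v ζ

variable [DecidableEq ι]

theorem dotProduct_one_sub_smul_vecMulVec_mulVec {R : Type*} [CommRing R]
    (r : R) (v ζ : ι → R) :
    ζ ⬝ᵥ ((1 - r • vecMulVec v v) *ᵥ ζ) = ζ ⬝ᵥ ζ - r * (v ⬝ᵥ ζ) ^ 2 := by
  rw [sub_mulVec, one_mulVec, smul_mulVec, vecMulVec_mulVec, dotProduct_sub, dotProduct_smul,
    op_smul_eq_smul, dotProduct_smul, dotProduct_comm ζ v]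
  simp only [smul_eq_mul]
  ring

theorem mul_dotProduct_self_le_dotProduct_one_sub_smul_vecMulVec_mulVec {S : ℝ} (hS : 0 ≤ S)
    (v ζ : ι → ℝ) :
    (1 - v ⬝ᵥ v / S) * (ζ ⬝ᵥ ζ) ≤ ζ ⬝ᵥ ((1 - S⁻¹ • vecMulVec v v) *ᵥ ζ) := by
  rw [dotProduct_one_sub_smul_vecMulVec_mulVec, sub_mul, one_mul, div_mul_eq_mul_div,
    ← div_eq_inv_mul]
  gcongr
  exact sq_dotProduct_le v ζ

end RankOnePerturbation

theorem submatrix_PL_posdef_general (n : ℕ) (δ : ℝ) (c : Fin (n + 1) → ℝ)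
    (hδ0 : 0 < δ) (hc : ∀ i, δ ≤ c i)
    (hsum : ∑ i, c i ≤ (n + 1 : ℝ)) :
    ∀ ζ : Fin n → ℝ,
      (c (Fin.last n) / ∑ k, c k) * (∑ i, (ζ i) ^ 2) ≤
        ζ ⬝ᵥ (Matrix.of fun i j : Fin n =>
          (if i = j then (1:ℝ) else 0) -
            Real.sqrt (c i.castSucc * c j.castSucc) / ∑ k, c k).mulVec ζ ∧
      (δ / (n + 1)) * (∑ i, (ζ i) ^ 2) ≤
        ζ ⬝ᵥ (Matrix.of fun i j : Fin n =>
          (if i = j then (1:ℝ) else 0) -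
            Real.sqrt (c i.castSucc * c j.castSucc) / ∑ k, c k).mulVec ζ := by
  intro ζ
  set S := ∑ k, c k
  have hc_pos : ∀ i, 0 < c i := fun i => hδ0.trans_le (hc i)
  have hS : 0 < S := Finset.sum_pos (fun i _ => hc_pos i) Finset.univ_nonempty
  set v : Fin n → ℝ := fun i => √(c i.castSucc)
  have hP : (Matrix.of fun i j : Fin n => (if i = j then (1:ℝ) else 0) -
      √(c i.castSucc * c j.castSucc) / S) = 1 - S⁻¹ • vecMulVec v v := by
    ext i j
    simp [v, one_apply, vecMulVec_apply, Real.sqrt_mul (hc_pos _).le, div_eq_inv_mul]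
  have hv : v ⬝ᵥ v = S - c (Fin.last n) := by
    simp [v, S, dotProduct, Real.mul_self_sqrt (hc_pos _).le, Fin.sum_univ_castSucc]
  have hbound : c (Fin.last n) / S * ∑ i, ζ i ^ 2 ≤ ζ ⬝ᵥ ((1 - S⁻¹ • vecMulVec v v) *ᵥ ζ) := by
    convert mul_dotProduct_self_le_dotProduct_one_sub_smul_vecMulVec_mulVec hS.le v ζ using 2
    · rw [hv]
      field_simp
      ring
    · simp only [dotProduct, sq]
  rw [hP]
  refine ⟨hbound, le_trans ?_ hbound⟩
  gcongr
  · exact (hc_pos _).le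
  · exact hc _

theorem submatrix_PL_posdef (n : ℕ) (δ : ℝ) (c : Fin (n + 1) → ℝ)
    (hδ0 : 0 < δ) (hδ1 : δ < 1 / (n + 1)) (hc : ∀ i, δ ≤ c i)
    (hsum : ∑ i, c i ≤ (n + 1 : ℝ)) :
    ∀ ζ : Fin n → ℝ,
      (c (Fin.last n) / ∑ k, c k) * (∑ i, (ζ i) ^ 2) ≤
        ζ ⬝ᵥ (Matrix.of fun i j : Fin n =>
          (if i = j then (1:ℝ) else 0) -
            Real.sqrt (c i.castSucc * c j.castSucc) / ∑ k, c k).mulVec ζ ∧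
      (δ / (n + 1)) * (∑ i, (ζ i) ^ 2) ≤
        ζ ⬝ᵥ (Matrix.of fun i j : Fin n =>
          (if i = j then (1:ℝ) else 0) -
            Real.sqrt (c i.castSucc * c j.castSucc) / ∑ k, c k).mulVec ζ :=
  submatrix_PL_posdef_general n δ c hδ0 hc hsum
end

section
/- Let h^δ: ℝ → ℝ be defined for δ ∈ (0, 1/2) by h^δ(r) = r log δ − δ/2 + r²/(2δ) for r < δ, h^δ(r) = r log r for δ ≤ r ≤ 1−δ, and h^δ(r) = r log(1−δ) − (1−δ)/2 + r²/(2(1−δ)) for r > 1−δ. Then h^δ is twice continuously differentiable on ℝ with (h^δ)''(r) = 1/χ_δ(r), where χ_δ(r) = max(δ, min(r, 1−δ)). In particular, h^δ is convex. -/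
/-- The regularized entropy density `h^δ`. -/
noncomputable def hdel (δ : ℝ) (r : ℝ) : ℝ :=
  if r < δ then r * Real.log δ - δ / 2 + r ^ 2 / (2 * δ)
  else if r ≤ 1 - δ then r * Real.log r
  else r * Real.log (1 - δ) - (1 - δ) / 2 + r ^ 2 / (2 * (1 - δ))

/-!
Write `χ r = max δ (min r (1 - δ))`. Outside `[δ, 1 - δ]` the function `h^δ` is the second-order
Taylor polynomial of `r log r` at the nearer endpoint `c`, namely `r log c - c/2 + r²/(2c)`, so
`h^δ` and its derivative `log χ + r / χ` glue in a `C¹` way at both endpoints, and the derivative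
of `log χ + r / χ` is `1 / χ` on each of the three pieces. Convexity follows from `1 / χ > 0`.
-/

open Set Filter Topology Real

noncomputable section

/-- The second-order Taylor polynomial of `r ↦ r log r` at `c`. -/
def mulLogTaylor (c r : ℝ) : ℝ := r * log c - c / 2 + r ^ 2 / (2 * c)

def chi (δ r : ℝ) : ℝ := max δ (min r (1 - δ))

def gdel (δ r : ℝ) : ℝ := log (chi δ r) + r / chi δ r

end

section Gluing

variable {E : Type*} [NormedAddCommGroup E] [NormedSpace ℝ E]

theorem HasDerivAt.of_nhdsLE_nhdsGE {F f g : ℝ → E} {F' : E} {a : ℝ}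
    (hf : HasDerivAt f F' a) (hg : HasDerivAt g F' a)
    (hfF : F =ᶠ[𝓝[≤] a] f) (hgF : F =ᶠ[𝓝[≥] a] g) : HasDerivAt F F' a := by
  have hle := hf.hasDerivWithinAt.congr_of_eventuallyEq hfF (hfF.eq_of_nhdsWithin self_mem_Iic)
  have hge := hg.hasDerivWithinAt.congr_of_eventuallyEq hgF (hgF.eq_of_nhdsWithin self_mem_Ici)
  simpa only [Iic_union_Ici, hasDerivWithinAt_univ] using hle.union hge

theorem hasDerivAt_of_three_pieces {F f g k F' : ℝ → E} {a b : ℝ} (hab : a < b)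
    (hf : ∀ x ≤ a, HasDerivAt f (F' x) x) (hg : ∀ x ∈ Icc a b, HasDerivAt g (F' x) x)
    (hk : ∀ x ≥ b, HasDerivAt k (F' x) x) (hFf : EqOn F f (Iic a)) (hFg : EqOn F g (Icc a b))
    (hFk : EqOn F k (Ici b)) (x : ℝ) : HasDerivAt F (F' x) x := by
  have hFf' : F =ᶠ[𝓝[≤] a] f := eventually_nhdsWithin_of_forall hFf
  have hFg_a : F =ᶠ[𝓝[≥] a] g := mem_of_superset (Icc_mem_nhdsGE hab) hFg
  have hFg_b : F =ᶠ[𝓝[≤] b] g := mem_of_superset (Icc_mem_nhdsLE hab) hFg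
  have hFk' : F =ᶠ[𝓝[≥] b] k := eventually_nhdsWithin_of_forall hFk
  rcases lt_trichotomy x a with hxa | rfl | hax
  · exact (hf x hxa.le).congr_of_eventuallyEq (mem_of_superset (Iio_mem_nhds hxa)
      fun y hy => hFf (mem_Iic.2 (le_of_lt hy)))
  · exact (hf x le_rfl).of_nhdsLE_nhdsGE (hg x ⟨le_rfl, hab.le⟩) hFf' hFg_a
  rcases lt_trichotomy x b with hxb | rfl | hbx
  · exact (hg x ⟨hax.le, hxb.le⟩).congr_of_eventuallyEq (mem_of_superset (Ioo_mem_nhds hax hxb)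
      fun y hy => hFg (Ioo_subset_Icc_self hy))
  · exact (hg x ⟨hab.le, le_rfl⟩).of_nhdsLE_nhdsGE (hk x le_rfl) hFg_b hFk'
  · exact (hk x hbx.le).congr_of_eventuallyEq (mem_of_superset (Ioi_mem_nhds hbx)
      fun y hy => hFk (mem_Ici.2 (le_of_lt hy)))

end Gluing

theorem contDiff_two_of_hasDerivAt {f f' f'' : ℝ → ℝ} (hf : ∀ x, HasDerivAt f (f' x) x)
    (hf' : ∀ x, HasDerivAt f' (f'' x) x) (hf'' : Continuous f'') : ContDiff ℝ 2 f := by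
  have hderiv : deriv f = f' := funext fun x => (hf x).deriv
  have hderiv' : deriv f' = f'' := funext fun x => (hf' x).deriv
  rw [show (2 : WithTop ℕ∞) = 1 + 1 from rfl, contDiff_succ_iff_deriv, hderiv,
    contDiff_one_iff_deriv, hderiv']
  exact ⟨fun x => (hf x).differentiableAt, by simp, fun x => (hf' x).differentiableAt, hf''⟩

theorem iteratedDeriv_two_of_hasDerivAt {f f' f'' : ℝ → ℝ} (hf : ∀ x, HasDerivAt f (f' x) x)
    (hf' : ∀ x, HasDerivAt f' (f'' x) x) : iteratedDeriv 2 f = f'' := by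
  rw [iteratedDeriv_succ, iteratedDeriv_one, funext fun x => (hf x).deriv]
  exact funext fun x => (hf' x).deriv

theorem hasDerivAt_mulLogTaylor (c x : ℝ) :
    HasDerivAt (mulLogTaylor c) (log c + x / c) x := by
  have := (((hasDerivAt_id' x).mul_const (log c)).sub_const (c / 2)).add
    ((hasDerivAt_pow 2 x).div_const (2 * c))
  refine this.congr_deriv ?_
  norm_num [mul_div_mul_left _ _ (two_ne_zero' ℝ)]

theorem hasDerivAt_log_add_div (c x : ℝ) : HasDerivAt (fun r => log c + r / c) (1 / c) x := by
  simpa only [one_div] using ((hasDerivAt_id' x).div_const c).const_add (log c)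

theorem mulLogTaylor_self {c : ℝ} (hc : c ≠ 0) : mulLogTaylor c c = c * log c := by
  unfold mulLogTaylor
  field_simp
  ring

section Truncation

variable {δ : ℝ}

theorem chi_of_le {r : ℝ} (hr : r ≤ δ) : chi δ r = δ :=
  max_eq_left ((min_le_left r _).trans hr)

theorem chi_of_mem_Icc {r : ℝ} (hr : r ∈ Icc δ (1 - δ)) : chi δ r = r := by
  rw [chi, min_eq_left hr.2, max_eq_right hr.1]

theorem chi_of_ge (hδ : δ ≤ 1 - δ) {r : ℝ} (hr : 1 - δ ≤ r) : chi δ r = 1 - δ := by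
  rw [chi, min_eq_right hr, max_eq_right hδ]

theorem chi_pos (hδ : 0 < δ) (r : ℝ) : 0 < chi δ r :=
  lt_max_of_lt_left hδ

theorem continuous_chi : Continuous (chi δ) :=
  continuous_const.max (continuous_id.min continuous_const)

end Truncation

section Pieces

variable {δ : ℝ}

theorem hdel_eqOn_Icc : EqOn (hdel δ) (fun r => r * log r) (Icc δ (1 - δ)) := by
  intro r hr
  simp [hdel, not_lt.2 hr.1, hr.2]

theorem hdel_eqOn_Iic (hδ0 : 0 < δ) (hδ1 : δ < 1 / 2) :
    EqOn (hdel δ) (mulLogTaylor δ) (Iic δ) := by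
  intro r (hr : r ≤ δ)
  rcases hr.lt_or_eq with hr | rfl
  · simp [hdel, mulLogTaylor, hr]
  · rw [mulLogTaylor_self hδ0.ne', hdel_eqOn_Icc ⟨le_rfl, by linarith⟩]

theorem hdel_eqOn_Ici (hδ1 : δ < 1 / 2) :
    EqOn (hdel δ) (mulLogTaylor (1 - δ)) (Ici (1 - δ)) := by
  intro r (hr : 1 - δ ≤ r)
  rcases hr.lt_or_eq with hr | rfl
  · simp [hdel, mulLogTaylor, not_lt.2 (by linarith : δ ≤ r), not_le.2 hr]
  · rw [mulLogTaylor_self (by linarith), hdel_eqOn_Icc ⟨by linarith, le_rfl⟩]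

theorem gdel_eqOn_Icc (hδ0 : 0 < δ) : EqOn (gdel δ) (fun r => log r + 1) (Icc δ (1 - δ)) := by
  intro r hr
  rw [gdel, chi_of_mem_Icc hr, div_self (hδ0.trans_le hr.1).ne']

theorem hasDerivAt_hdel (hδ0 : 0 < δ) (hδ1 : δ < 1 / 2) (x : ℝ) :
    HasDerivAt (hdel δ) (gdel δ x) x := by
  have hδ : δ ≤ 1 - δ := by linarith
  refine hasDerivAt_of_three_pieces (by linarith) (fun r hr => ?_) (fun r hr => ?_)
    (fun r hr => ?_) (hdel_eqOn_Iic hδ0 hδ1) hdel_eqOn_Icc (hdel_eqOn_Ici hδ1) x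
  · rw [gdel, chi_of_le hr]
    exact hasDerivAt_mulLogTaylor δ r
  · rw [gdel_eqOn_Icc hδ0 hr]
    exact hasDerivAt_mul_log (hδ0.trans_le hr.1).ne'
  · rw [gdel, chi_of_ge hδ hr]
    exact hasDerivAt_mulLogTaylor (1 - δ) r

theorem hasDerivAt_gdel (hδ0 : 0 < δ) (hδ1 : δ < 1 / 2) (x : ℝ) :
    HasDerivAt (gdel δ) (1 / chi δ x) x := by
  have hδ : δ ≤ 1 - δ := by linarith
  refine hasDerivAt_of_three_pieces (F' := fun r => 1 / chi δ r) (by linarith)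
    (fun r hr => ?_) (fun r hr => ?_) (fun r hr => ?_)
    (fun r (hr : r ≤ δ) => by rw [gdel, chi_of_le hr]) (gdel_eqOn_Icc hδ0)
    (fun r (hr : 1 - δ ≤ r) => by rw [gdel, chi_of_ge hδ hr]) x
  · rw [chi_of_le hr]
    exact hasDerivAt_log_add_div δ r
  · rw [chi_of_mem_Icc hr, one_div]
    exact (hasDerivAt_log (hδ0.trans_le hr.1).ne').add_const 1
  · rw [chi_of_ge hδ hr]
    exact hasDerivAt_log_add_div (1 - δ) r

end Pieces

theorem hdel_C2_convex (δ : ℝ) (hδ0 : 0 < δ) (hδ1 : δ < 1 / 2) :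
    ContDiff ℝ 2 (hdel δ) ∧
    (∀ r : ℝ, iteratedDeriv 2 (hdel δ) r = 1 / max δ (min r (1 - δ))) ∧
    ConvexOn ℝ Set.univ (hdel δ) := by
  have h1 := hasDerivAt_hdel hδ0 hδ1
  have h2 := hasDerivAt_gdel hδ0 hδ1
  have h2_eq : iteratedDeriv 2 (hdel δ) = fun r => 1 / chi δ r :=
    iteratedDeriv_two_of_hasDerivAt h1 h2
  refine ⟨contDiff_two_of_hasDerivAt h1 h2 ?_, fun r => congrFun h2_eq r, ?_⟩
  · exact continuous_const.div continuous_chi fun r => (chi_pos hδ0 r).ne'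
  · refine convexOn_univ_of_deriv2_nonneg (fun r => (h1 r).differentiableAt) ?_ fun r => ?_
    · rw [funext fun r => (h1 r).deriv]
      exact fun r => (h2 r).differentiableAt
    · rw [← iteratedDeriv_eq_iterate, h2_eq]
      exact one_div_nonneg.2 (chi_pos hδ0 r).le
end

section
/- Let c ∈ ℝ^n with c_i > 0 and ∑ c_i = 1, and let k_{ij} = k_{ji} ≥ 0 with k_{ij} > 0 for i ≠ j. Define the Maxwell–Stefan matrix D^{MS}(c)_{ij} = δ_{ij} ∑_{ℓ=1}^n k_{iℓ} c_ℓ − k_{ij} √(c_i c_j). Then D^{MS}(c) is symmetric and positive semidefinite, and √c = (√c_1,…,√c_n) lies in its kernel. -/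
open Matrix

/-- The Maxwell--Stefan matrix `D^{MS}(c)`. -/
noncomputable def DMS (n : ℕ) (k : Matrix (Fin n) (Fin n) ℝ) (c : Fin n → ℝ) :
    Matrix (Fin n) (Fin n) ℝ :=
  Matrix.of fun i j =>
    (if i = j then (1:ℝ) else 0) * (∑ l, k i l * c l) -
      k i j * Real.sqrt (c i * c j)

/-!
With `s = √c`, the Maxwell–Stefan matrix is `diag(K (s ∘ s)) - diag(s) K diag(s)`. Its quadratic
form is `½ ∑ᵢⱼ kᵢⱼ (sⱼ xᵢ - sᵢ xⱼ)²`, which is nonnegative when `K` is symmetric with nonnegative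
entries and vanishes at `x = s`.
-/

namespace Matrix

variable {ι R : Type*} [Fintype ι] [DecidableEq ι] [CommRing R]

def maxwellStefan (k : Matrix ι ι R) (s : ι → R) : Matrix ι ι R :=
  diagonal (k *ᵥ (s * s)) - diagonal s * k * diagonal s

theorem maxwellStefan_isSymm {k : Matrix ι ι R} (hk : k.IsSymm) (s : ι → R) :
    (maxwellStefan k s).IsSymm := by
  simp only [maxwellStefan, IsSymm, transpose_sub, transpose_mul, diagonal_transpose, hk.eq,
    Matrix.mul_assoc]

theorem maxwellStefan_mulVec (k : Matrix ι ι R) (s x : ι → R) :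
    maxwellStefan k s *ᵥ x = k *ᵥ (s * s) * x - s * (k *ᵥ (s * x)) := by
  have hdiag (v w : ι → R) : diagonal v *ᵥ w = v * w := funext (mulVec_diagonal v w)
  simp only [maxwellStefan, sub_mulVec, ← mulVec_mulVec, hdiag]

theorem maxwellStefan_mulVec_self (k : Matrix ι ι R) (s : ι → R) :
    maxwellStefan k s *ᵥ s = 0 := by
  rw [maxwellStefan_mulVec, mul_comm, sub_self]

theorem two_mul_dotProduct_maxwellStefan_mulVec {k : Matrix ι ι R} (hk : k.IsSymm)
    (s x : ι → R) :
    2 * (x ⬝ᵥ (maxwellStefan k s *ᵥ x)) = ∑ i, ∑ j, k i j * (s j * x i - s i * x j) ^ 2 := by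
  have hswap : ∑ i, ∑ j, k i j * (s i * x j) ^ 2 = ∑ i, ∑ j, k i j * (s j * x i) ^ 2 := by
    rw [Finset.sum_comm]
    simp only [hk.apply]
  calc 2 * (x ⬝ᵥ (maxwellStefan k s *ᵥ x))
      = 2 * ∑ i, ∑ j, (k i j * (s j * x i) ^ 2 - k i j * (s i * x i) * (s j * x j)) := by
        rw [maxwellStefan_mulVec]
        simp only [dotProduct, mulVec, Pi.sub_apply, Pi.mul_apply, Finset.mul_sum, Finset.sum_mul,
          ← Finset.sum_sub_distrib]
        congr! 3
        ring
    _ = ∑ i, ∑ j, (k i j * (s j * x i) ^ 2 + k i j * (s i * x j) ^ 2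
          - 2 * (k i j * (s i * x i) * (s j * x j))) := by
        simp only [Finset.sum_add_distrib, Finset.sum_sub_distrib, ← Finset.mul_sum, hswap]
        ring
    _ = ∑ i, ∑ j, k i j * (s j * x i - s i * x j) ^ 2 := by
        congr! 2
        ring

theorem maxwellStefan_posSemidef {k : Matrix ι ι ℝ} (hk : k.IsSymm) (hk₀ : ∀ i j, 0 ≤ k i j)
    (s : ι → ℝ) : (maxwellStefan k s).PosSemidef := by
  refine .of_dotProduct_mulVec_nonneg (isHermitian_iff_isSymm.2 (maxwellStefan_isSymm hk s))
    fun x => ?_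
  have hform := two_mul_dotProduct_maxwellStefan_mulVec hk s x
  have hsos : 0 ≤ ∑ i, ∑ j, k i j * (s j * x i - s i * x j) ^ 2 :=
    Finset.sum_nonneg fun i _ => Finset.sum_nonneg fun j _ => mul_nonneg (hk₀ i j) (sq_nonneg _)
  rw [star_trivial]
  linarith

end Matrix

theorem DMS_eq_maxwellStefan (n : ℕ) (k : Matrix (Fin n) (Fin n) ℝ) {c : Fin n → ℝ}
    (hc : ∀ i, 0 ≤ c i) : DMS n k c = maxwellStefan k fun i => √(c i) := by
  ext i j
  have hsq : ∀ l, √(c l) * √(c l) = c l := fun l => Real.mul_self_sqrt (hc l)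
  simp only [DMS, maxwellStefan, of_apply, Matrix.sub_apply, diagonal_mul, mul_diagonal,
    diagonal_apply, mulVec, dotProduct, Pi.mul_apply, hsq, Real.sqrt_mul (hc i)]
  split_ifs <;> ring

theorem DMS_symm_psd_kernel_general (n : ℕ) (k : Matrix (Fin n) (Fin n) ℝ)
    (c : Fin n → ℝ) (hc : ∀ i, 0 < c i)
    (hksymm : ∀ i j, k i j = k j i) (hknn : ∀ i j, 0 ≤ k i j) :
    (DMS n k c)ᵀ = DMS n k c ∧ (DMS n k c).PosSemidef ∧
      (DMS n k c).mulVec (fun i => Real.sqrt (c i)) = 0 := by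
  have hk : k.IsSymm := IsSymm.ext fun i j => hksymm j i
  rw [DMS_eq_maxwellStefan n k fun i => (hc i).le]
  exact ⟨maxwellStefan_isSymm hk _, maxwellStefan_posSemidef hk hknn _,
    maxwellStefan_mulVec_self k _⟩

theorem DMS_symm_psd_kernel (n : ℕ) (k : Matrix (Fin n) (Fin n) ℝ)
    (c : Fin n → ℝ) (hc : ∀ i, 0 < c i) (hsum : ∑ i, c i = 1)
    (hksymm : ∀ i j, k i j = k j i) (hknn : ∀ i j, 0 ≤ k i j)
    (hkpos : ∀ i j, i ≠ j → 0 < k i j) :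
    (DMS n k c)ᵀ = DMS n k c ∧ (DMS n k c).PosSemidef ∧
      (DMS n k c).mulVec (fun i => Real.sqrt (c i)) = 0 :=
  DMS_symm_psd_kernel_general n k c hc hksymm hknn
end
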